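/- arXiv:2402.00982 — 2 statements merged into one kernel-verified Lean document; each statement's English description precedes it below -/
import Mathlib

section
/- If an NRTSS ℛ is in equivariant format, then the transition relation induced by ℛ is equivariant: whenever the transition NT⟦s⟧→NT⟦r⟧ is provable in ℛ and π is a finite permutation of atoms, the transition π·NT⟦s⟧→π·NT⟦r⟧ is also provable in ℛ; hence ℛ induces a nominal residual transition system (NRTS), i.e., a triple (S, R, →) of nominal sets S of states and R of residuals together with an equivariant relation → ⊆ S × R. -/
/-! Permuting a proof tree node by node yields a proof tree: the action of a permutation commutes
with substitution and preserves groundness, alpha-equivalence and freshness, and it sends each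
rule instance to an instance of the permuted rule. That rule lies in `R` because every finite
permutation is a product of transpositions. -/

set_option maxHeartbeats 1000000

/-- Atoms: a countably infinite set. -/
abbrev Atom : Type := ℕ

/-- The subgroup of `Equiv.Perm Atom` consisting of the finite permutations,
i.e. those moving only finitely many atoms. -/
def finPermSubgroup : Subgroup (Equiv.Perm Atom) where
  carrier := {π : Equiv.Perm Atom | {a : Atom | π a ≠ a}.Finite}
  one_mem' := by
    have h : {a : Atom | (1 : Equiv.Perm Atom) a ≠ a} = ∅ := by ext a; simp
    simp only [Set.mem_setOf_eq, h]
    exact Set.finite_empty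
  mul_mem' := by
    intro π σ hπ hσ
    refine (hπ.union hσ).subset ?_
    intro a ha
    simp only [Set.mem_setOf_eq, Equiv.Perm.mul_apply] at ha
    by_cases h : σ a = a
    · exact Or.inl (by simp only [Set.mem_setOf_eq]; rwa [h] at ha)
    · exact Or.inr h
  inv_mem' := by
    intro π hπ
    refine (hπ.image (⇑π⁻¹)).subset ?_
    intro a ha
    simp only [Set.mem_setOf_eq] at ha
    have h1 : π a ≠ a := by
      intro h
      apply ha
      conv_lhs => rw [← h]
      simp
    exact ⟨π a, fun h => h1 (π.injective h), by simp⟩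

/-- Finite permutations of atoms. -/
abbrev FinPerm : Type := finPermSubgroup

/-- The transposition of two atoms, as a finite permutation. -/
def swapPerm (a b : Atom) : FinPerm :=
  ⟨Equiv.swap a b, by
    refine ((Set.finite_singleton b).insert a).subset ?_
    intro x hx
    simp only [Set.mem_setOf_eq] at hx
    by_contra h
    simp only [Set.mem_insert_iff, Set.mem_singleton_iff, not_or] at h
    exact hx (Equiv.swap_apply_of_ne_of_ne h.1 h.2)⟩

/-- Raw terms over a nominal signature (with set of function symbols `F`) and a set `V`
of variables: variables, atoms, moderated terms (explicit permutations), atom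
abstractions, (binary-encoded, with empty product `unit`) products, and data built
with function symbols. -/
inductive RawTerm (V F : Type) : Type
  | var : V → RawTerm V F
  | atom : Atom → RawTerm V F
  | mod : FinPerm → RawTerm V F → RawTerm V F
  | abs : Atom → RawTerm V F → RawTerm V F
  | unit : RawTerm V F
  | pair : RawTerm V F → RawTerm V F → RawTerm V F
  | app : F → RawTerm V F → RawTerm V F

variable {V F : Type}

/-- The permutation action on raw terms: `π·x = x`, `π·a = π a`,
`π·(π₁·t) = (π ∘ π₁ ∘ π⁻¹)·(π·t)`, `π·[a]t = [π a](π·t)`, componentwise on products,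
`π·f(t) = f(π·t)`. -/
def permTerm (π : FinPerm) : RawTerm V F → RawTerm V F
  | .var x => .var x
  | .atom a => .atom (π.1 a)
  | .mod π₁ t => .mod (π * π₁ * π⁻¹) (permTerm π t)
  | .abs a t => .abs (π.1 a) (permTerm π t)
  | .unit => .unit
  | .pair t s => .pair (permTerm π t) (permTerm π s)
  | .app f t => .app f (permTerm π t)

/-- A raw term is ground iff no variables occur in it. -/
def IsGround : RawTerm V F → Prop
  | .var _ => False
  | .atom _ => True
  | .mod _ t => IsGround t
  | .abs _ t => IsGround t
  | .unit => True
  | .pair t s => IsGround t ∧ IsGround s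
  | .app _ t => IsGround t

/-- The extension `φ̄` of a substitution `φ` to raw terms, defined homomorphically. -/
def ext (φ : V → RawTerm V F) : RawTerm V F → RawTerm V F
  | .var x => φ x
  | .atom a => .atom a
  | .mod π t => .mod π (ext φ t)
  | .abs a t => .abs a (ext φ t)
  | .unit => .unit
  | .pair t s => .pair (ext φ t) (ext φ s)
  | .app f t => .app f (ext φ t)

/-- A substitution (i.e. a function from variables to raw terms; permutations act on it
by conjugation, fixing the variables) is finitely supported. -/
def FinSuppSubst (φ : V → RawTerm V F) : Prop :=
  ∃ A : Set Atom, A.Finite ∧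
    ∀ π : FinPerm, (∀ a ∈ A, π.1 a = a) → ∀ x, permTerm π (φ x) = φ x

/-- A set of atoms supports a substitution (w.r.t. the conjugation action on functions,
variables being fixed by permutations). -/
def SupportsSubst (A : Set Atom) (φ : V → RawTerm V F) : Prop :=
  ∀ π : FinPerm, (∀ a ∈ A, π.1 a = a) → ∀ x, permTerm π (φ x) = φ x

/-- A set of atoms supports a function from raw terms to raw terms
(w.r.t. the conjugation action on functions). -/
def SupportsFunRT (A : Set Atom) (g : RawTerm V F → RawTerm V F) : Prop :=
  ∀ π : FinPerm, (∀ a ∈ A, π.1 a = a) → ∀ t, permTerm π (g (permTerm π⁻¹ t)) = g t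

/-- A ground substitution: it maps every variable to a ground term. -/
def GroundSubst (φ : V → RawTerm V F) : Prop := ∀ x, IsGround (φ x)

/-- `freshN a p` expresses, for a ground term `p`, that the atom `a` is fresh in
(i.e. not in the support of) the nominal term `NT⟦p⟧` denoted by `p`. -/
def freshN (a : Atom) : RawTerm V F → Prop
  | .var _ => True
  | .atom b => a ≠ b
  | .mod π t => freshN (π⁻¹.1 a) t
  | .abs b t => a = b ∨ freshN a t
  | .unit => True
  | .pair t s => freshN a t ∧ freshN a s
  | .app _ t => freshN a t

/-- Alpha-equivalence of raw terms: two (ground) raw terms are related iff they denote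
the same nominal term; moderated terms are identified with the result of applying the
delayed permutation. -/
inductive Aeq : RawTerm V F → RawTerm V F → Prop
  | var (x : V) : Aeq (.var x) (.var x)
  | atom (a : Atom) : Aeq (.atom a) (.atom a)
  | unit : Aeq .unit .unit
  | pair {t₁ t₂ s₁ s₂ : RawTerm V F} : Aeq t₁ s₁ → Aeq t₂ s₂ →
      Aeq (.pair t₁ t₂) (.pair s₁ s₂)
  | app (f : F) {t s : RawTerm V F} : Aeq t s → Aeq (.app f t) (.app f s)
  | abs_same (a : Atom) {t s : RawTerm V F} : Aeq t s → Aeq (.abs a t) (.abs a s)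
  | abs_diff {a b : Atom} {t s : RawTerm V F} : a ≠ b → freshN a s →
      Aeq t (permTerm (swapPerm a b) s) → Aeq (.abs a t) (.abs b s)
  | mod_left {π : FinPerm} {t s : RawTerm V F} : Aeq (permTerm π t) s → Aeq (.mod π t) s
  | mod_right {π : FinPerm} {t s : RawTerm V F} : Aeq t (permTerm π s) → Aeq t (.mod π s)

attribute [local instance] Classical.propDecidable

/-- A transition rule `H, ∇ / t → t'` of a nominal residual transition system
specification: a set `H` of premisses (formulas between raw terms), a finite freshness
environment `∇` of freshness assertions `a ≉ v`, and a conclusion with source `t` and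
target `t'`. -/
structure Rule (V F : Type) where
  prem : Set (RawTerm V F × RawTerm V F)
  env : Finset (Atom × RawTerm V F)
  src : RawTerm V F
  tgt : RawTerm V F

/-- The (componentwise) permutation action on rules. -/
noncomputable def permRule (π : FinPerm) (Ru : Rule V F) : Rule V F where
  prem := (fun u => (permTerm π u.1, permTerm π u.2)) '' Ru.prem
  env := Ru.env.image (fun e => (π.1 e.1, permTerm π e.2))
  src := permTerm π Ru.src
  tgt := permTerm π Ru.tgt

/-- A set of atoms supports a set of formulas (premisses), w.r.t. the pointwise
permutation action. -/
def SupportsPrem (A : Set Atom) (H : Set (RawTerm V F × RawTerm V F)) : Prop :=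
  ∀ π : FinPerm, (∀ a ∈ A, π.1 a = a) →
    (fun u => (permTerm π u.1, permTerm π u.2)) '' H = H

/-- An NRTSS `R` is in equivariant format iff it is closed under applying
transpositions of atoms to its rules. -/
def EquivariantFormat (R : Set (Rule V F)) : Prop :=
  ∀ Ru ∈ R, ∀ a b : Atom, permRule (swapPerm a b) Ru ∈ R

/-- Provability of a transition in the NRTSS `R`.  Transitions relate nominal terms,
i.e. alpha-equivalence classes of ground raw terms; here they are represented by ground
raw terms and the relation is saturated under alpha-equivalence (`Aeq`).
`Provable R p r` holds iff the transition `NT⟦p⟧ → NT⟦r⟧` has a proof tree in `R`: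
there are a rule of `R` and a ground substitution `φ` whose instance of the conclusion
denotes `NT⟦p⟧ → NT⟦r⟧`, such that all instantiated premisses are provable and all
instantiated freshness assertions `a ≉ v` represent true freshness relations
`a # NT⟦φ(v)⟧`. -/
inductive Provable (R : Set (Rule V F)) : RawTerm V F → RawTerm V F → Prop
  | step (Ru : Rule V F) (hRu : Ru ∈ R) (φ : V → RawTerm V F) (hφ : GroundSubst φ)
      (p r : RawTerm V F)
      (hsrc : Aeq (ext φ Ru.src) p) (htgt : Aeq (ext φ Ru.tgt) r)
      (hprem : ∀ u ∈ Ru.prem, Provable R (ext φ u.1) (ext φ u.2))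
      (henv : ∀ e ∈ Ru.env, freshN e.1 (ext φ e.2)) :
      Provable R p r

@[simp]
lemma permTerm_one (t : RawTerm V F) : permTerm 1 t = t := by
  induction t <;> simp_all [permTerm]

lemma permTerm_mul (π σ : FinPerm) (t : RawTerm V F) :
    permTerm (π * σ) t = permTerm π (permTerm σ t) := by
  induction t <;> simp_all [permTerm, mul_assoc]

lemma permTerm_conj (π σ : FinPerm) (t : RawTerm V F) :
    permTerm (π * σ * π⁻¹) (permTerm π t) = permTerm π (permTerm σ t) := by
  rw [← permTerm_mul, ← permTerm_mul, inv_mul_cancel_right]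

lemma IsGround.permTerm (π : FinPerm) {t : RawTerm V F} (h : IsGround t) :
    IsGround (permTerm π t) := by
  induction t <;> simp_all [_root_.permTerm, IsGround]

lemma freshN_permTerm (π : FinPerm) {a : Atom} {t : RawTerm V F} (h : freshN a t) :
    freshN (π.1 a) (permTerm π t) := by
  induction t generalizing a with
  | mod σ t ih =>
    have hconj : (π * σ * π⁻¹)⁻¹.1 (π.1 a) = π.1 (σ⁻¹.1 a) := by simp
    simpa only [permTerm, freshN, hconj] using ih h
  | abs b t ih => exact h.imp (congrArg π.1) ih
  | _ => simp_all [permTerm, freshN]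

lemma ext_permTerm (π : FinPerm) (φ : V → RawTerm V F) (t : RawTerm V F) :
    ext (fun x => permTerm π (φ x)) (permTerm π t) = permTerm π (ext φ t) := by
  induction t <;> simp_all [permTerm, ext]

lemma swapPerm_conj (π : FinPerm) (a b : Atom) :
    swapPerm (π.1 a) (π.1 b) = π * swapPerm a b * π⁻¹ :=
  Subtype.ext (Equiv.swap_apply_apply π.1 a b)

lemma Aeq.permTerm (π : FinPerm) {t s : RawTerm V F} (h : Aeq t s) :
    Aeq (permTerm π t) (permTerm π s) := by
  induction h with
  | var x => exact .var x
  | atom a => exact .atom _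
  | unit => exact .unit
  | pair _ _ ih₁ ih₂ => exact .pair ih₁ ih₂
  | app f _ ih => exact .app f ih
  | abs_same a _ ih => exact .abs_same _ ih
  | abs_diff hab hfresh _ ih =>
    refine .abs_diff (π.1.injective.ne hab) (freshN_permTerm π hfresh) ?_
    rwa [swapPerm_conj, permTerm_conj]
  | mod_left _ ih => exact .mod_left (by rwa [permTerm_conj])
  | mod_right _ ih => exact .mod_right (by rwa [permTerm_conj])

@[simp]
lemma permRule_one (Ru : Rule V F) : permRule 1 Ru = Ru := by
  simp [permRule]

lemma permRule_mul (π σ : FinPerm) (Ru : Rule V F) :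
    permRule (π * σ) Ru = permRule π (permRule σ Ru) := by
  simp [permRule, Set.image_image, Finset.image_image, Function.comp_def, permTerm_mul]

lemma finPermSubgroup_eq_closure_isSwap :
    finPermSubgroup = Subgroup.closure {σ : Equiv.Perm Atom | σ.IsSwap} := by
  ext σ
  rw [mem_closure_isSwap']
  rfl

lemma FinPerm.swap_induction_on {motive : FinPerm → Prop} (π : FinPerm) (one : motive 1)
    (swap_mul : ∀ a b π, motive π → motive (swapPerm a b * π)) : motive π := by
  obtain ⟨σ, hσ⟩ := π
  have hσ' : σ ∈ Subgroup.closure {σ : Equiv.Perm Atom | σ.IsSwap} :=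
    finPermSubgroup_eq_closure_isSwap ▸ hσ
  induction hσ' using Subgroup.closure_induction_left with
  | one => exact one
  | mul_left τ hτ ρ hρ ih =>
    obtain ⟨a, b, -, rfl⟩ := hτ
    exact swap_mul a b _ (ih (finPermSubgroup_eq_closure_isSwap ▸ hρ))
  | inv_mul_cancel τ hτ ρ hρ ih =>
    obtain ⟨a, b, -, rfl⟩ := hτ
    simp only [Equiv.swap_inv]
    exact swap_mul a b _ (ih (finPermSubgroup_eq_closure_isSwap ▸ hρ))

lemma EquivariantFormat.permRule_mem {R : Set (Rule V F)} (hR : EquivariantFormat R)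
    {Ru : Rule V F} (hRu : Ru ∈ R) (π : FinPerm) : permRule π Ru ∈ R := by
  induction π using FinPerm.swap_induction_on with
  | one => rwa [permRule_one]
  | swap_mul a b π ih => simpa only [permRule_mul] using hR _ ih a b

lemma Provable.permTerm {R : Set (Rule V F)} (hR : ∀ Ru ∈ R, ∀ π, permRule π Ru ∈ R)
    {p r : RawTerm V F} (h : Provable R p r) (π : FinPerm) :
    Provable R (permTerm π p) (permTerm π r) := by
  induction h with
  | step Ru hRu φ hφ p r hsrc htgt _ henv ih =>
    refine .step (permRule π Ru) (hR Ru hRu π) (fun x => _root_.permTerm π (φ x))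
      (fun x => (hφ x).permTerm π) _ _ ?_ ?_ ?_ ?_
    · simpa only [permRule, ext_permTerm] using hsrc.permTerm π
    · simpa only [permRule, ext_permTerm] using htgt.permTerm π
    · rintro _ ⟨u, hu, rfl⟩
      simpa only [ext_permTerm] using ih u hu
    · intro e he
      obtain ⟨e₀, he₀, rfl⟩ := Finset.mem_image.1 he
      simpa only [ext_permTerm] using freshN_permTerm π (henv e₀ he₀)

theorem equivariant_format_induces_NRTS_general {V F : Type} (R : Set (Rule V F))
    (hEq : EquivariantFormat R) :
    ∀ p r : RawTerm V F, Provable R p r →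
      ∀ π : FinPerm, Provable R (permTerm π p) (permTerm π r) :=
  fun _ _ h => h.permTerm fun _ hRu => hEq.permRule_mem hRu

/-- If an NRTSS `R` is in equivariant format then the transition
relation induced by `R` (on nominal terms, here represented by ground raw terms up to
alpha-equivalence) is equivariant: whenever `NT⟦p⟧ → NT⟦r⟧` is provable in `R` and `π`
is a finite permutation of atoms, `π·NT⟦p⟧ → π·NT⟦r⟧` is also provable in `R`.  Hence
`R` induces a nominal residual transition system. -/
theorem equivariant_format_induces_NRTS {V F : Type} (R : Set (Rule V F))
    (hfs : ∀ Ru ∈ R, ∃ A : Set Atom, A.Finite ∧ SupportsPrem A Ru.prem)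
    (hEq : EquivariantFormat R) :
    ∀ p r : RawTerm V F, Provable R p r →
      ∀ π : FinPerm, Provable R (permTerm π p) (permTerm π r) :=
  equivariant_format_induces_NRTS_general R hEq
end

section
/- The simplification relation ⟹ on freshness environments is confluent and terminating. -/
set_option maxHeartbeats 1000000

variable {V F : Type}

attribute [local instance] Classical.propDecidable

/-- Simplification of freshness environments (finite sets of freshness assertions
`a ≉ t`): the rewrite relation `⟹` generated by the rules of
Definition "Simplification of freshness environments" (the selected assertion is
required not to occur in the remaining environment, as `⟹` rewrites sets). -/
inductive EStep : Finset (Atom × RawTerm V F) → Finset (Atom × RawTerm V F) → Prop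
  | atom (a b : Atom) (E : Finset (Atom × RawTerm V F)) : a ≠ b →
      (a, RawTerm.atom b) ∉ E →
      EStep (insert (a, RawTerm.atom b) E) E
  | mod (a : Atom) (π : FinPerm) (t : RawTerm V F) (E : Finset (Atom × RawTerm V F)) :
      (a, RawTerm.mod π t) ∉ E →
      EStep (insert (a, RawTerm.mod π t) E) (insert (π⁻¹.1 a, t) E)
  | abs_diff (a b : Atom) (t : RawTerm V F) (E : Finset (Atom × RawTerm V F)) :
      a ≠ b → (a, RawTerm.abs b t) ∉ E →
      EStep (insert (a, RawTerm.abs b t) E) (insert (a, t) E)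
  | abs_same (a : Atom) (t : RawTerm V F) (E : Finset (Atom × RawTerm V F)) :
      (a, RawTerm.abs a t) ∉ E →
      EStep (insert (a, RawTerm.abs a t) E) E
  | unit (a : Atom) (E : Finset (Atom × RawTerm V F)) :
      (a, RawTerm.unit) ∉ E →
      EStep (insert (a, (RawTerm.unit : RawTerm V F)) E) E
  | pair (a : Atom) (t s : RawTerm V F) (E : Finset (Atom × RawTerm V F)) :
      (a, RawTerm.pair t s) ∉ E →
      EStep (insert (a, RawTerm.pair t s) E) (insert (a, t) (insert (a, s) E))
  | app (a : Atom) (f : F) (t : RawTerm V F) (E : Finset (Atom × RawTerm V F)) :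
      (a, RawTerm.app f t) ∉ E →
      EStep (insert (a, RawTerm.app f t) E) (insert (a, t) E)

/-- A freshness assertion is reduced iff it is of the form `a ≉ a` or `a ≉ x` with `x`
a variable; an environment is reduced iff all its assertions are. -/
def ReducedEnv (E : Finset (Atom × RawTerm V F)) : Prop :=
  ∀ p ∈ E, (∃ a : Atom, p = (a, RawTerm.atom a)) ∨
    (∃ (a : Atom) (x : V), p = (a, RawTerm.var x))

/-!
Each step replaces an assertion `a ≉ t` by assertions about proper subterms of `t`, so the total
size of the environment drops and `⟹` terminates. For confluence, send `a ≉ t` to the finite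
set of reduced assertions it must end up as (`assertionNF a t`, computed by recursion on `t`),
and an environment to the union of these sets. This normal form is invariant under `⟹` and is
the identity on reduced environments, and an environment with no `⟹`-successor is reduced; hence
every environment simplifies to its normal form, and any two of its reducts to a common one.
-/

namespace RawTerm

def size : RawTerm V F → ℕ
  | .var _ => 1
  | .atom _ => 1
  | .mod _ t => t.size + 1
  | .abs _ t => t.size + 1
  | .unit => 1
  | .pair t s => t.size + s.size + 1
  | .app _ t => t.size + 1

lemma size_pos (t : RawTerm V F) : 0 < t.size := by
  cases t <;> simp [size]

end RawTerm

noncomputable def envSize (E : Finset (Atom × RawTerm V F)) : ℕ := ∑ p ∈ E, p.2.size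

lemma envSize_insert_le (p : Atom × RawTerm V F) (E : Finset (Atom × RawTerm V F)) :
    envSize (insert p E) ≤ p.2.size + envSize E := by
  by_cases h : p ∈ E
  · rw [Finset.insert_eq_self.2 h]; exact Nat.le_add_left _ _
  · rw [envSize, Finset.sum_insert h]; rfl

lemma envSize_insert {p : Atom × RawTerm V F} {E : Finset (Atom × RawTerm V F)} (h : p ∉ E) :
    envSize (insert p E) = p.2.size + envSize E :=
  Finset.sum_insert h

lemma EStep.envSize_lt {E E' : Finset (Atom × RawTerm V F)} (h : EStep E E') :
    envSize E' < envSize E := by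
  cases h with
  | atom a b E _ hnm =>
    rw [envSize_insert hnm]; simp [RawTerm.size]
  | mod a π t E hnm =>
    rw [envSize_insert hnm]
    have := envSize_insert_le (π⁻¹.1 a, t) E
    simp only [RawTerm.size] at this ⊢; omega
  | abs_diff a b t E _ hnm =>
    rw [envSize_insert hnm]
    have := envSize_insert_le (a, t) E
    simp only [RawTerm.size] at this ⊢; omega
  | abs_same a t E hnm =>
    rw [envSize_insert hnm]; simp [RawTerm.size]
  | unit a E hnm =>
    rw [envSize_insert hnm]; simp [RawTerm.size]
  | pair a t s E hnm =>
    rw [envSize_insert hnm]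
    have := envSize_insert_le (a, t) (insert (a, s) E)
    have := envSize_insert_le (a, s) E
    simp only [RawTerm.size] at *; omega
  | app a f t E hnm =>
    rw [envSize_insert hnm]
    have := envSize_insert_le (a, t) E
    simp only [RawTerm.size] at this ⊢; omega

theorem EStep.wellFounded_flip : WellFounded (flip (EStep (V := V) (F := F))) :=
  Subrelation.wf (fun h => EStep.envSize_lt h) (InvImage.wf envSize wellFounded_lt)

noncomputable def assertionNF : Atom → RawTerm V F → Finset (Atom × RawTerm V F)
  | a, .var x => {(a, .var x)}
  | a, .atom b => if a = b then {(a, .atom a)} else ∅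
  | a, .mod π t => assertionNF (π⁻¹.1 a) t
  | a, .abs b t => if a = b then ∅ else assertionNF a t
  | _, .unit => ∅
  | a, .pair t s => assertionNF a t ∪ assertionNF a s
  | a, .app _ t => assertionNF a t

noncomputable def envNF (E : Finset (Atom × RawTerm V F)) : Finset (Atom × RawTerm V F) :=
  E.biUnion fun p => assertionNF p.1 p.2

lemma envNF_insert (p : Atom × RawTerm V F) (E : Finset (Atom × RawTerm V F)) :
    envNF (insert p E) = assertionNF p.1 p.2 ∪ envNF E :=
  Finset.biUnion_insert

lemma EStep.envNF_eq {E E' : Finset (Atom × RawTerm V F)} (h : EStep E E') :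
    envNF E = envNF E' := by
  cases h with
  | atom a b E hab _ => simp [envNF_insert, assertionNF, hab]
  | mod => simp only [envNF_insert, assertionNF]
  | abs_diff a b t E hab _ => simp [envNF_insert, assertionNF, hab]
  | abs_same => simp [envNF_insert, assertionNF]
  | unit => simp [envNF_insert, assertionNF]
  | pair => simp [envNF_insert, assertionNF, Finset.union_assoc]
  | app => simp only [envNF_insert, assertionNF]

lemma envNF_eq_of_reflTransGen {E E' : Finset (Atom × RawTerm V F)}
    (h : Relation.ReflTransGen EStep E E') : envNF E = envNF E' := by
  induction h with
  | refl => rfl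
  | tail _ hstep ih => exact ih.trans hstep.envNF_eq

lemma ReducedEnv.envNF_eq {E : Finset (Atom × RawTerm V F)} (h : ReducedEnv E) :
    envNF E = E := by
  ext q
  simp only [envNF, Finset.mem_biUnion]
  constructor
  · rintro ⟨p, hp, hq⟩
    rcases h p hp with ⟨a, rfl⟩ | ⟨a, x, rfl⟩ <;>
      simp only [assertionNF, if_true, Finset.mem_singleton] at hq <;> rwa [hq]
  · intro hq
    refine ⟨q, hq, ?_⟩
    rcases h q hq with ⟨a, rfl⟩ | ⟨a, x, rfl⟩ <;> simp [assertionNF]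

lemma exists_EStep_of_not_reducedEnv {E : Finset (Atom × RawTerm V F)} (h : ¬ReducedEnv E) :
    ∃ E', EStep E E' := by
  simp only [ReducedEnv, not_forall, not_or, not_exists] at h
  obtain ⟨⟨a, t⟩, hmem, hatom, hvar⟩ := h
  have hne : (a, t) ∉ E.erase (a, t) := Finset.notMem_erase _ _
  rw [← Finset.insert_erase hmem]
  cases t with
  | var x => exact absurd rfl (hvar a x)
  | atom b =>
    have hab : a ≠ b := by rintro rfl; exact hatom a rfl
    exact ⟨_, .atom a b _ hab hne⟩
  | mod π t => exact ⟨_, .mod a π t _ hne⟩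
  | abs b t =>
    by_cases hab : a = b
    · subst hab; exact ⟨_, .abs_same a t _ hne⟩
    · exact ⟨_, .abs_diff a b t _ hab hne⟩
  | unit => exact ⟨_, .unit a _ hne⟩
  | pair t s => exact ⟨_, .pair a t s _ hne⟩
  | app f t => exact ⟨_, .app a f t _ hne⟩

lemma reflTransGen_envNF (E : Finset (Atom × RawTerm V F)) :
    Relation.ReflTransGen EStep E (envNF E) := by
  induction E using EStep.wellFounded_flip.induction with
  | _ E ih =>
    by_cases hred : ReducedEnv E
    · rw [hred.envNF_eq]
    · obtain ⟨E', hE'⟩ := exists_EStep_of_not_reducedEnv hred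
      rw [hE'.envNF_eq]
      exact .head hE' (ih E' hE')

/-- The simplification relation `⟹` on freshness environments is
confluent and terminating (there is no infinite sequence of `⟹`-steps, i.e. the
converse of `⟹` is well-founded). -/
theorem simplification_confluent_and_terminating (V F : Type) :
    (∀ E E₁ E₂ : Finset (Atom × RawTerm V F),
      Relation.ReflTransGen EStep E E₁ → Relation.ReflTransGen EStep E E₂ →
      ∃ E₃, Relation.ReflTransGen EStep E₁ E₃ ∧ Relation.ReflTransGen EStep E₂ E₃) ∧
    WellFounded (fun E' E : Finset (Atom × RawTerm V F) => EStep E E') := by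
  refine ⟨fun E E₁ E₂ h₁ h₂ => ⟨envNF E, ?_, ?_⟩, EStep.wellFounded_flip⟩
  · simpa only [envNF_eq_of_reflTransGen h₁] using reflTransGen_envNF E₁
  · simpa only [envNF_eq_of_reflTransGen h₂] using reflTransGen_envNF E₂
end
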